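/- The code C of Construction 7 has the d-optimal repair property: for every node index i ∈ {1,…,n} and every subset R ⊆ {1,…,n}∖{i} with |R| = d, there exist F-linear maps φ_j : F^l → F^{l/s} for j ∈ R such that any two codewords (C_1,…,C_n) and (C'_1,…,C'_n) in C satisfying φ_j(C_j) = φ_j(C'_j) for all j ∈ R also satisfy C_i = C'_i. (Thus node i is recoverable by downloading l/s = l/(d+1−k) field symbols from each of any d helper nodes, meeting the cut-set bound, over any field with at least n+1 elements and with subpacketization l = s^{n−1}.) -/

import Mathlib

/-!
Put `D = C - C'`. Since the `A_j` commute, replacing node `j` by `(A_j - A_m) D_j` turns a codeword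
with `t + 1` checks into one with `t` checks that vanishes at node `m`. Doing this for the
`n - 1 - d` non-helpers leaves `s` checks involving only node `i` and the helpers, and the step is
injective at node `i` because `A_m^s = γ^{e_m} ≠ γ^{e_i} = A_i^s`. After multiplying by `A_i⁻¹`,
so that `A_i = 1`, each `A_j` is a weighted shift `v ↦ (a ↦ μ(a) v(a + g_j))` of the digit vectors
`(ℤ/s)^{n-1}`, and some character `w` satisfies `w(g_j) = 1` for all `j ≠ i`. At a coordinate `b`
the check `t = -w(b)` therefore reads every helper only on `ker w`, a set of `l/s` coordinates,
so the helpers' eliminated values there force node `i` to vanish at `b`.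
-/

open Matrix Finset

section Elimination

variable {ι I F : Type*} [Fintype I] [DecidableEq I] [CommRing F] {A : ι → Matrix I I F}

def elimMatrix (A : ι → Matrix I I F) (L : List ι) (j : ι) : Matrix I I F :=
  (L.map fun m => A j - A m).prod

lemma elimMatrix_eq_zero {L : List ι} {m : ι} (hm : m ∈ L) : elimMatrix A L m = 0 :=
  List.prod_eq_zero (List.mem_map.2 ⟨m, hm, sub_self _⟩)

lemma injective_elimMatrix_mulVec {L : List ι} {i : ι}
    (hL : ∀ m ∈ L, Function.Injective (A i - A m).mulVec) :
    Function.Injective (elimMatrix A L i).mulVec := by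
  induction L with
  | nil => exact fun v w h => by simpa [elimMatrix] using h
  | cons m L ih =>
    have h := (hL m List.mem_cons_self).comp (ih fun m' hm' => hL m' (List.mem_cons_of_mem _ hm'))
    simpa [elimMatrix, Function.comp_def, mulVec_mulVec] using h

end Elimination

section Code

variable {ι I F : Type*} [Fintype ι] [Fintype I] [DecidableEq I] [CommRing F]

def IsCodeword (A : ι → Matrix I I F) (r : ℕ) (C : ι → I → F) : Prop :=
  ∀ t < r, ∑ j, A j ^ t *ᵥ C j = 0

namespace IsCodeword

variable {A : ι → Matrix I I F} {r : ℕ} {C C' : ι → I → F}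

lemma mono (h : IsCodeword A r C) {r' : ℕ} (hr : r' ≤ r) : IsCodeword A r' C :=
  fun t ht => h t (ht.trans_le hr)

lemma sub (h : IsCodeword A r C) (h' : IsCodeword A r C') : IsCodeword A r (C - C') := by
  intro t ht
  simp only [Pi.sub_apply, mulVec_sub, sum_sub_distrib, h t ht, h' t ht, sub_zero]

lemma mul_left (h : IsCodeword A r C) {M : Matrix I I F} (hM : ∀ j, Commute M (A j)) :
    IsCodeword (fun j => M * A j) r C := by
  intro t ht
  simp_rw [(hM _).mul_pow, ← mulVec_mulVec, ← mulVec_sum, h t ht, mulVec_zero]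

lemma sub_mulVec {m : ι} (hA : ∀ j, Commute (A m) (A j)) (h : IsCodeword A (r + 1) C) :
    IsCodeword A r (fun j => (A j - A m) *ᵥ C j) := by
  intro t ht
  have hcheck : ∀ j, A j ^ t *ᵥ ((A j - A m) *ᵥ C j) =
      A j ^ (t + 1) *ᵥ C j - A m *ᵥ (A j ^ t *ᵥ C j) := by
    intro j
    rw [mulVec_mulVec, mulVec_mulVec, mul_sub, ← pow_succ, ((hA j).pow_right t).eq,
      Matrix.sub_mulVec]
  simp_rw [hcheck, sum_sub_distrib, ← mulVec_sum, h t (by omega), h (t + 1) (by omega),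
    mulVec_zero, sub_zero]

lemma elim (hA : ∀ j j', Commute (A j) (A j')) (L : List ι)
    (h : IsCodeword A (r + L.length) C) : IsCodeword A r (fun j => elimMatrix A L j *ᵥ C j) := by
  induction L generalizing r with
  | nil => simpa [elimMatrix] using h
  | cons m L ih =>
    have := (ih (r := r + 1) (h.mono (by simp only [List.length_cons]; omega))).sub_mulVec (hA m)
    simpa [elimMatrix, mulVec_mulVec] using this

lemma eq_zero_of_rows [DecidableEq ι] {B : ι → Matrix I I F} {s : ℕ} {E : ι → I → F}
    (hE : IsCodeword B s E) {i : ι} {R : Finset ι} (hiR : i ∉ R) (hBi : B i = 1)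
    (hsupp : ∀ j ∉ insert i R, E j = 0) {S : Finset I} (hES : ∀ j ∈ R, ∀ b ∈ S, E j b = 0)
    (hrow : ∀ b, ∃ t < s, ∀ j ∈ R, ∀ v : I → F, (∀ b' ∈ S, v b' = 0) → (B j ^ t *ᵥ v) b = 0) :
    E i = 0 := by
  funext b
  obtain ⟨t, ht, hrow⟩ := hrow b
  have hsum := congrFun (hE t ht) b
  rw [← sum_subset (subset_univ (insert i R)) fun j _ hj => by rw [hsupp j hj, mulVec_zero],
    sum_insert hiR, hBi, one_pow, one_mulVec, Pi.add_apply, Finset.sum_apply,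
    sum_eq_zero fun j hj => hrow j hj _ (hES j hj), add_zero] at hsum
  exact hsum

end IsCodeword

end Code

lemma Finset.exists_linearMap_eq_zero_of_card_le {I F : Type*} [Semiring F] (S : Finset I)
    {L : ℕ} (hS : S.card ≤ L) :
    ∃ ψ : (I → F) →ₗ[F] (Fin L → F), ∀ v, ψ v = 0 → ∀ b ∈ S, v b = 0 := by
  obtain ⟨e⟩ : Nonempty (S ↪ Fin L) := Function.Embedding.nonempty_of_card_le (by simpa using hS)
  refine ⟨Function.ExtendByZero.linearMap F e ∘ₗ LinearMap.funLeft F F ((↑) : S → I),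
    fun v hv b hb => ?_⟩
  simpa [LinearMap.funLeft, e.injective.extend_apply] using congrFun hv (e ⟨b, hb⟩)

section Repair

variable {ι I F : Type*} [Field F] [Fintype I] [DecidableEq I]

lemma injective_one_sub_mulVec_of_pow_eq_smul_one {B : Matrix I I F} {s : ℕ} {c : F}
    (hB : B ^ s = c • 1) (hc : c ≠ 1) : Function.Injective (1 - B).mulVec := by
  rw [← coe_mulVecLin]
  refine (injective_iff_map_eq_zero _).2 fun v hv => ?_
  have hfix : B *ᵥ v = v := by
    simpa [Matrix.sub_mulVec, sub_eq_zero, eq_comm] using hv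
  have hpow : ∀ t : ℕ, B ^ t *ᵥ v = v := by
    intro t
    induction t with
    | zero => simp
    | succ t ih => rw [pow_succ, ← mulVec_mulVec, hfix, ih]
  have hcv : c • v = v := by simpa [hB, smul_mulVec] using hpow s
  have : (c - 1) • v = 0 := by rw [sub_smul, one_smul, hcv, sub_self]
  exact (smul_eq_zero.1 this).resolve_left (sub_ne_zero.2 hc)

lemma inv_smul_pow_pred_mul_self {A : Matrix I I F} {s : ℕ} [NeZero s] {c : F}
    (hA : A ^ s = c • 1) (hc : c ≠ 0) : (c⁻¹ • A ^ (s - 1)) * A = 1 := by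
  rw [smul_mul_assoc, ← pow_succ, Nat.sub_add_cancel NeZero.one_le, hA, smul_smul,
    inv_mul_cancel₀ hc, one_smul]

lemma inv_smul_pow_pred_pow {A : Matrix I I F} {s : ℕ} [NeZero s] {c : F}
    (hA : A ^ s = c • 1) (hc : c ≠ 0) : (c⁻¹ • A ^ (s - 1)) ^ s = c⁻¹ • 1 := by
  have hcomm : Commute (c⁻¹ • A ^ (s - 1)) A := ((Commute.refl A).pow_left _).smul_left _
  have h : c • (c⁻¹ • A ^ (s - 1)) ^ s = 1 := calc
    _ = (c⁻¹ • A ^ (s - 1)) ^ s * A ^ s := by rw [hA, mul_smul_comm, mul_one]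
    _ = 1 := by rw [← hcomm.mul_pow, inv_smul_pow_pred_mul_self hA hc, one_pow]
  rw [← h, smul_smul, inv_mul_cancel₀ hc, one_smul]

variable [Fintype ι] [DecidableEq ι]

theorem IsCodeword.exists_repair {B : ι → Matrix I I F}
    (hB : ∀ j j', Commute (B j) (B j')) {i : ι} {R : Finset ι} (hiR : i ∉ R) (hBi : B i = 1)
    {s r : ℕ} (hsr : s + (univ \ insert i R).card ≤ r)
    (hfix : ∀ j ∉ insert i R, Function.Injective (1 - B j).mulVec)
    {S : Finset I} {L : ℕ} (hS : S.card ≤ L)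
    (hrow : ∀ b, ∃ t < s, ∀ j ∈ R, ∀ v : I → F, (∀ b' ∈ S, v b' = 0) → (B j ^ t *ᵥ v) b = 0) :
    ∃ φ : ι → (I → F) →ₗ[F] (Fin L → F),
      ∀ D, IsCodeword B r D → (∀ j ∈ R, φ j (D j) = 0) → D i = 0 := by
  obtain ⟨ψ, hψ⟩ := S.exists_linearMap_eq_zero_of_card_le (F := F) hS
  set N := (univ \ insert i R).toList
  refine ⟨fun j => ψ ∘ₗ (elimMatrix B N j).mulVecLin, fun D hD hφ => ?_⟩
  have hE := (hD.mono (by simpa [N] using hsr)).elim hB N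
  refine injective_elimMatrix_mulVec (fun m hm => ?_)
    ((hE.eq_zero_of_rows hiR hBi (fun j hj => ?_) (fun j hj => hψ _ (hφ j hj)) hrow).trans
      (mulVec_zero _).symm)
  · exact hBi ▸ hfix m (by simpa [N] using hm)
  · rw [elimMatrix_eq_zero (mem_toList.2 (mem_sdiff.2 ⟨mem_univ j, hj⟩)), zero_mulVec]

end Repair

section WeightedShift

variable {G F : Type*} [Fintype G] [CommRing F]

def IsWeightedShift [Add G] (M : Matrix G G F) (μ : G → F) (g : G) : Prop :=
  ∀ v a, (M *ᵥ v) a = μ a * v (a + g)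

namespace IsWeightedShift

variable [AddMonoid G] {M N : Matrix G G F} {μ ν : G → F} {g h : G}

lemma mul (hM : IsWeightedShift M μ g) (hN : IsWeightedShift N ν h) :
    IsWeightedShift (M * N) (fun a => μ a * ν (a + g)) (g + h) := fun v a => by
  rw [← mulVec_mulVec, hM, hN, add_assoc, mul_assoc]

lemma smul (hM : IsWeightedShift M μ g) (c : F) : IsWeightedShift (c • M) (c • μ) g :=
  fun v a => by rw [smul_mulVec, Pi.smul_apply, hM, Pi.smul_apply, smul_eq_mul, smul_eq_mul,
    mul_assoc]

lemma unique (hM : IsWeightedShift M μ g) (hN : IsWeightedShift N μ g) : M = N :=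
  ext_iff_mulVec.2 fun v => funext fun a => by rw [hM, hN]

variable [DecidableEq G]

lemma one : IsWeightedShift (1 : Matrix G G F) (fun _ => 1) 0 := fun v a => by simp

lemma pow (hM : IsWeightedShift M μ g) (t : ℕ) :
    IsWeightedShift (M ^ t) (fun a => ∏ k ∈ range t, μ (a + k • g)) (t • g) := by
  induction t with
  | zero => simpa using one
  | succ t ih => simpa [pow_succ, prod_range_succ, succ_nsmul] using ih.mul hM

lemma eq_smul_one {c : F} (hM : IsWeightedShift M (fun _ => c) 0) : M = c • 1 :=
  ext_iff_mulVec.2 fun v => funext fun a => by simp [hM v a, smul_mulVec]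

end IsWeightedShift

end WeightedShift

section FinAddGroup

variable {s : ℕ} [NeZero s]

lemma Fin.val_nsmul_one_eq_self (x : Fin s) : (x : ℕ) • (1 : Fin s) = x := by
  suffices h : ∀ k : ℕ, ((k • (1 : Fin s) : Fin s) : ℕ) = k % s by
    ext; rw [h, Nat.mod_eq_of_lt x.isLt]
  intro k
  induction k with
  | zero => simp
  | succ k ih => rw [succ_nsmul, Fin.val_add, ih, Fin.val_one', Nat.add_mod_mod, Nat.mod_add_mod]

lemma Fin.card_nsmul_eq_zero (x : Fin s) : s • x = 0 := by
  simpa using card_nsmul_eq_zero' (G := Fin s) (x := x)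

lemma Fin.card_sub_one_nsmul (x : Fin s) : (s - 1) • x = -x := by
  rw [eq_neg_iff_add_eq_zero, ← succ_nsmul, Nat.sub_add_cancel NeZero.one_le,
    Fin.card_nsmul_eq_zero]

lemma Fin.prod_range_card_add_nsmul_one {M : Type*} [CommMonoid M] (f : Fin s → M) (x : Fin s) :
    ∏ t ∈ range s, f (x + t • 1) = ∏ u, f u := by
  rw [← Fin.prod_univ_eq_prod_range (fun t => f (x + t • 1))]
  simp only [Fin.val_nsmul_one_eq_self]
  exact Fintype.prod_equiv (Equiv.addLeft x) _ _ fun _ => rfl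

lemma AddMonoidHom.card_ker_mul_of_surjective {G : Type*} [AddGroup G] (w : G →+ Fin s)
    (hw : Function.Surjective w) : Nat.card w.ker * s = Nat.card G := by
  rw [← w.ker.card_mul_index, AddSubgroup.index_ker, w.range_eq_top.2 hw, AddSubgroup.card_top,
    Nat.card_fin]

end FinAddGroup

theorem IsCodeword.exists_repair_of_isWeightedShift {ι G F : Type*} [Fintype ι] [DecidableEq ι]
    [Nontrivial ι] [AddCommGroup G] [Fintype G] [DecidableEq G] [Field F] {s : ℕ} [NeZero s]
    {A : ι → Matrix G G F} (hA : ∀ j j', Commute (A j) (A j')) {δ : ι → G}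
    (hshift : ∀ j, ∃ μ, IsWeightedShift (A j) μ (δ j)) {c : ι → F} (hpow : ∀ j, A j ^ s = c j • 1)
    {i : ι} (hci : c i ≠ 0) (hc : ∀ j ≠ i, c j ≠ c i)
    (w : G →+ Fin s) (hw : ∀ j ≠ i, w (δ j) - w (δ i) = 1)
    {R : Finset ι} (hiR : i ∉ R) {r : ℕ} (hsr : s + (univ \ insert i R).card ≤ r)
    {L : ℕ} (hL : Nat.card G ≤ s * L) :
    ∃ φ : ι → (G → F) →ₗ[F] (Fin L → F),
      ∀ D, IsCodeword A r D → (∀ j ∈ R, φ j (D j) = 0) → D i = 0 := by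
  obtain ⟨j₀, hj₀⟩ := exists_ne i
  have hsurj : Function.Surjective w := fun x =>
    ⟨(x : ℕ) • (δ j₀ - δ i), by rw [map_nsmul, map_sub, hw j₀ hj₀, Fin.val_nsmul_one_eq_self]⟩
  have hker : #{b | b ∈ w.ker} ≤ L := by
    have h := w.card_ker_mul_of_surjective hsurj
    rw [Nat.card_eq_fintype_card, Fintype.card_subtype, mul_comm] at h
    exact Nat.le_of_mul_le_mul_left (h ▸ hL) (Nat.pos_of_neZero s)
  set M := (c i)⁻¹ • A i ^ (s - 1)
  have hMA : ∀ j, Commute M (A j) := fun j => ((hA i j).pow_left _).smul_left _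
  have hMAi : M * A i = 1 := inv_smul_pow_pred_mul_self (hpow i) hci
  have hMs : M ^ s = (c i)⁻¹ • 1 := inv_smul_pow_pred_pow (hpow i) hci
  have hB : ∀ j j', Commute (M * A j) (M * A j') := fun j j' =>
    ((Commute.refl M).mul_right (hMA j')).mul_left ((hMA j).symm.mul_right (hA j j'))
  have hfix : ∀ j ∉ insert i R, Function.Injective (1 - M * A j).mulVec := fun j hj =>
    injective_one_sub_mulVec_of_pow_eq_smul_one
      (by rw [(hMA j).mul_pow, hMs, hpow, smul_mul_smul_comm, one_mul])
      fun h => hc j (ne_of_mem_of_not_mem (mem_insert_self i R) hj).symm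
        ((inv_mul_eq_one₀ hci).1 h).symm
  have hrow : ∀ b, ∃ t < s, ∀ j ∈ R, ∀ v : G → F,
      (∀ b' ∈ ({b | b ∈ w.ker} : Finset G), v b' = 0) → ((M * A j) ^ t *ᵥ v) b = 0 := by
    intro b
    refine ⟨(-w b : Fin s), (-w b).isLt, fun j hj v hv => ?_⟩
    obtain ⟨μ, hμ⟩ := hshift j
    obtain ⟨μi, hμi⟩ := hshift i
    -- `M * A j` shifts by `(s - 1) • δ i + δ j`, on which `w` takes the value `1`.
    rw [((((hμi.pow (s - 1)).smul (c i)⁻¹).mul hμ).pow _) v b, hv, mul_zero]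
    simp only [mem_filter, mem_univ, true_and, AddMonoidHom.mem_ker, map_add, map_nsmul,
      Fin.card_sub_one_nsmul, neg_add_eq_sub, hw j (ne_of_mem_of_not_mem hj hiR),
      Fin.val_nsmul_one_eq_self, add_neg_cancel]
  obtain ⟨φ, hφ⟩ := IsCodeword.exists_repair hB hiR hMAi hsr hfix hker hrow
  exact ⟨φ, fun D hD => hφ D (hD.mul_left hMA)⟩

section DigitShift

variable {F : Type*} [CommRing F] {m s : ℕ}

def digitShift (w : Fin s → F) (k : Fin m) : Matrix (Fin m → Fin s) (Fin m → Fin s) F :=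
  Matrix.of fun a b =>
    if b = Function.update a k ⟨((a k : ℕ) + 1) % s, Nat.mod_lt _ (a k).pos⟩ then w (a k) else 0

variable [NeZero s]

lemma Function.update_succ_eq_add_single (a : Fin m → Fin s) (k : Fin m) :
    Function.update a k ⟨((a k : ℕ) + 1) % s, Nat.mod_lt _ (a k).pos⟩ = a + Pi.single k 1 := by
  ext k'
  rcases eq_or_ne k' k with rfl | hk
  · simp [Fin.val_add]
  · simp [hk]

lemma isWeightedShift_digitShift (w : Fin s → F) (k : Fin m) :
    IsWeightedShift (digitShift w k) (fun a => w (a k)) (Pi.single k 1) := fun v a => by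
  simp [digitShift, mulVec, dotProduct, Function.update_succ_eq_add_single, ite_mul]

lemma digitShift_pow_card (w : Fin s → F) (k : Fin m) :
    digitShift w k ^ s = (∏ u, w u) • 1 := by
  have h := (isWeightedShift_digitShift w k).pow s
  rw [← Pi.single_smul, Fin.card_nsmul_eq_zero, Pi.single_zero] at h
  refine IsWeightedShift.eq_smul_one ?_
  convert h using 1
  funext a
  simp [Fin.prod_range_card_add_nsmul_one]

lemma commute_digitShift (w w' : Fin s → F) {k k' : Fin m} (hk : k ≠ k') :
    Commute (digitShift w k) (digitShift w' k') := by
  have h := (isWeightedShift_digitShift w k).mul (isWeightedShift_digitShift w' k')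
  have h' := (isWeightedShift_digitShift w' k').mul (isWeightedShift_digitShift w k)
  refine h.unique ?_
  simpa [add_comm, hk, hk.symm, mul_comm] using h'

end DigitShift

section Construction7

variable {F : Type*} [CommRing F] {n s : ℕ}

def nodeShift [NeZero s] (j : Fin n) : Fin (n - 1) → Fin s :=
  if h : (j : ℕ) < n - 1 then Pi.single ⟨j, h⟩ 1 else 0

def nodeExponent (j : Fin n) : ℕ :=
  if (j : ℕ) < n - 1 then j + 1 else 0

lemma nodeExponent_lt (j : Fin n) : nodeExponent j < n := by
  unfold nodeExponent; split_ifs <;> omega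

lemma nodeExponent_injective : Function.Injective (nodeExponent (n := n)) := fun j j' h => by
  unfold nodeExponent at h; ext; split_ifs at h <;> omega

lemma exists_addMonoidHom_nodeShift_sub_eq_one [NeZero s] (i : Fin n) :
    ∃ w : (Fin (n - 1) → Fin s) →+ Fin s, ∀ j ≠ i, w (nodeShift j) - w (nodeShift i) = 1 := by
  by_cases hi : (i : ℕ) < n - 1
  · refine ⟨-Pi.evalAddMonoidHom (fun _ => Fin s) ⟨i, hi⟩, fun j hj => ?_⟩
    have hji : (j : ℕ) ≠ i := Fin.val_ne_of_ne hj
    simp [nodeShift, hi]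
    split_ifs <;> simp [hji]
  · refine ⟨∑ k, Pi.evalAddMonoidHom (fun _ => Fin s) k, fun j hj => ?_⟩
    have hj' : (j : ℕ) < n - 1 := by have := Fin.val_ne_of_ne hj; omega
    simp [nodeShift, hi, hj']

variable [NeZero s] {A : Fin n → Matrix (Fin (n - 1) → Fin s) (Fin (n - 1) → Fin s) F}
  {lam : Fin (n - 1) → Fin s → F}

lemma exists_isWeightedShift_nodeShift
    (hA : ∀ (j : Fin n) (hj : (j : ℕ) < n - 1), A j = digitShift (lam ⟨j, hj⟩) ⟨j, hj⟩)
    (hA1 : ∀ j : Fin n, ¬ (j : ℕ) < n - 1 → A j = 1) (j : Fin n) :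
    ∃ μ, IsWeightedShift (A j) μ (nodeShift j) := by
  by_cases hj : (j : ℕ) < n - 1
  · exact ⟨_, by simpa [hA j hj, nodeShift, hj] using isWeightedShift_digitShift _ _⟩
  · exact ⟨_, by simpa [hA1 j hj, nodeShift, hj] using IsWeightedShift.one⟩

lemma commute_of_digitShift
    (hA : ∀ (j : Fin n) (hj : (j : ℕ) < n - 1), A j = digitShift (lam ⟨j, hj⟩) ⟨j, hj⟩)
    (hA1 : ∀ j : Fin n, ¬ (j : ℕ) < n - 1 → A j = 1) (j j' : Fin n) :
    Commute (A j) (A j') := by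
  rcases eq_or_ne j j' with rfl | hne
  · exact Commute.refl _
  by_cases hj : (j : ℕ) < n - 1
  · by_cases hj' : (j' : ℕ) < n - 1
    · rw [hA j hj, hA j' hj']
      exact commute_digitShift _ _ fun h => hne (Fin.ext (Fin.mk.inj_iff.1 h))
    · rw [hA1 j' hj']; exact Commute.one_right _
  · rw [hA1 j hj]; exact Commute.one_left _

lemma pow_card_of_digitShift
    (hA : ∀ (j : Fin n) (hj : (j : ℕ) < n - 1), A j = digitShift (lam ⟨j, hj⟩) ⟨j, hj⟩)
    (hA1 : ∀ j : Fin n, ¬ (j : ℕ) < n - 1 → A j = 1) {γ : F}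
    (hlam : ∀ (k : Fin (n - 1)) (u : Fin s),
      lam k u = if (u : ℕ) = 0 then γ ^ ((k : ℕ) + 1) else 1)
    (j : Fin n) : A j ^ s = γ ^ nodeExponent j • 1 := by
  by_cases hj : (j : ℕ) < n - 1
  · simp [hA j hj, digitShift_pow_card, hlam, nodeExponent, hj, Fin.val_eq_zero_iff]
  · simp [hA1 j hj, nodeExponent, hj]

end Construction7

section PrimitiveElement

variable {F : Type*} [Field F] [Fintype F] {γ : F}

lemma ne_zero_of_forall_eq_pow (hγ : ∀ x : F, x ≠ 0 → ∃ m : ℕ, x = γ ^ m)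
    (hF : 2 < Fintype.card F) : γ ≠ 0 := by
  classical
  rintro rfl
  have hunit : ∀ u : Fˣ, u = 1 := fun u => by
    obtain ⟨_ | m, hm⟩ := hγ u u.ne_zero
    · exact Units.ext (by simpa using hm)
    · simp at hm
  have := Fintype.card_le_one_iff.2 fun u v : Fˣ => (hunit u).trans (hunit v).symm
  rw [Fintype.card_units] at this
  omega

lemma orderOf_eq_card_sub_one_of_forall_eq_pow (hγ : ∀ x : F, x ≠ 0 → ∃ m : ℕ, x = γ ^ m)
    (hγ0 : γ ≠ 0) : orderOf γ = Fintype.card F - 1 := by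
  classical
  have h := orderOf_units (y := Units.mk0 γ hγ0)
  rw [Units.val_mk0] at h
  rw [h, orderOf_eq_card_of_forall_mem_powers, Nat.card_eq_fintype_card, Fintype.card_units]
  intro u
  obtain ⟨m, hm⟩ := hγ u u.ne_zero
  exact ⟨m, Units.ext (by simp [hm])⟩

end PrimitiveElement

open Matrix in
/-- Construction 7 has the `d`-optimal repair property: for any node `i` and any
`d` helper nodes `R` there exist linear repair functions `φ_j : F^l → F^{l/s}`
whose values on the helper nodes determine the contents of node `i`. -/
theorem construction7_d_optimal_repair
    (F : Type*) [Field F] [Fintype F]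
    (n r d s : ℕ) (hrn : r < n)
    (hd1 : n - r ≤ d) (hd2 : d ≤ n - 1) (hs : s = d + 1 - (n - r))
    (hF : n + 1 ≤ Fintype.card F)
    (γ : F) (hγprim : ∀ x : F, x ≠ 0 → ∃ m : ℕ, x = γ ^ m)
    (lam : Fin (n - 1) → Fin s → F)
    (hlam : ∀ (i : Fin (n - 1)) (u : Fin s),
      lam i u = if (u : ℕ) = 0 then γ ^ ((i : ℕ) + 1) else 1)
    (A : Fin n → Matrix (Fin (n - 1) → Fin s) (Fin (n - 1) → Fin s) F)
    (hA : ∀ (i : Fin n) (hi : (i : ℕ) < n - 1),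
      A i = Matrix.of fun a b : Fin (n - 1) → Fin s =>
        if b = Function.update a ⟨i, hi⟩
            ⟨((a ⟨i, hi⟩ : ℕ) + 1) % s, Nat.mod_lt _ (a ⟨i, hi⟩).pos⟩
        then lam ⟨i, hi⟩ (a ⟨i, hi⟩) else 0)
    (hAn : A ⟨n - 1, by omega⟩ = 1)
    (i : Fin n) (R : Finset (Fin n)) (hiR : i ∉ R) (hR : R.card = d) :
    ∃ φ : Fin n → (((Fin (n - 1) → Fin s) → F) →ₗ[F]
        (Fin (s ^ (n - 1) / s) → F)),
      ∀ C C' : Fin n → (Fin (n - 1) → Fin s) → F,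
        (∀ t < r, ∑ j, (A j ^ t) *ᵥ C j = 0) →
        (∀ t < r, ∑ j, (A j ^ t) *ᵥ C' j = 0) →
        (∀ j ∈ R, φ j (C j) = φ j (C' j)) →
        C i = C' i := by
  have : NeZero s := ⟨by omega⟩
  have : Nontrivial (Fin n) := Fin.nontrivial_iff_two_le.2 (by omega)
  have hA1 : ∀ j : Fin n, ¬ (j : ℕ) < n - 1 → A j = 1 := fun j hj => by
    rwa [show j = ⟨n - 1, by omega⟩ from Fin.ext (by have := j.isLt; simp only; omega)]
  have hγ0 : γ ≠ 0 := ne_zero_of_forall_eq_pow hγprim (by omega)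
  have hγinj : Set.InjOn (γ ^ ·) (Set.Iio n) := pow_injOn_Iio_orderOf.mono fun m hm => by
    rw [Set.mem_Iio, orderOf_eq_card_sub_one_of_forall_eq_pow hγprim hγ0]
    exact lt_of_lt_of_le hm (by omega)
  obtain ⟨w, hw⟩ := exists_addMonoidHom_nodeShift_sub_eq_one (s := s) i
  have hsr : s + #(univ \ insert i R) ≤ r := by
    rw [card_sdiff_of_subset (subset_univ _), card_insert_of_notMem hiR, hR, card_univ,
      Fintype.card_fin]
    omega
  have hL : Nat.card (Fin (n - 1) → Fin s) ≤ s * (s ^ (n - 1) / s) := by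
    rw [Nat.card_eq_fintype_card, Fintype.card_fun, Fintype.card_fin, Fintype.card_fin,
      Nat.mul_div_cancel' (dvd_pow_self s (by omega))]
  obtain ⟨φ, hφ⟩ := IsCodeword.exists_repair_of_isWeightedShift (commute_of_digitShift hA hA1)
    (exists_isWeightedShift_nodeShift hA hA1) (pow_card_of_digitShift hA hA1 hlam)
    (pow_ne_zero _ hγ0) (fun j hj h => hj (nodeExponent_injective
      (hγinj (nodeExponent_lt j) (nodeExponent_lt i) h))) w hw hiR hsr hL
  exact ⟨φ, fun C C' hC hC' hCC' =>
    sub_eq_zero.1 (hφ _ (IsCodeword.sub hC hC') fun j hj => by simp [hCC' j hj])⟩
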